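/- Assume P : ℝ^d × ℝ^d → ℝ is continuous and symmetric, i.e. P(v,w) = P(w,v) for all v,w. Let k_d, k_o solve the scaled Riccati system and let differentiable functions v_1,…,v_N : [0,T] → ℝ^d solve the closed-loop system. Then the empirical variance σ²(t) = (1/N) Σ_{j=1}^N |v_j(t) − m(t)|², with m(t) = (1/N) Σ_{j=1}^N v_j(t), satisfies for all t ∈ [0,T]: (σ²)'(t) = −(1/N²) Σ_{i=1}^N Σ_{j=1}^N P(v_i(t),v_j(t)) |v_i(t) − v_j(t)|² − (2/ν)(k_d(t) − k_o(t)/N) σ²(t). -/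

import Mathlib

/-!
Differentiating `σ² = N⁻¹ Σⱼ ‖vⱼ - m‖²` gives `2 N⁻¹ Σⱼ ⟪vⱼ - m, vⱼ'⟫`; the term coming from `m'`
drops out because the deviations `vⱼ - m` sum to zero. For the same reason the mean-field part
`(k_o / N) Σ vⱼ` of the feedback contributes nothing and its diagonal part `(k_d - k_o / N) vⱼ`
contributes `(k_d - k_o / N) N σ²`. In the interaction term, exchanging `i` and `j` and using the
symmetry of `P` turns `Σᵢⱼ P(vⱼ, vᵢ) ⟪vⱼ - m, vᵢ - vⱼ⟫` into `-½ Σᵢⱼ P(vᵢ, vⱼ) ‖vᵢ - vⱼ‖²`.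
-/

open Set Finset RealInnerProductSpace

theorem sum_inner_sub_sum_smul_sub_of_symm {ι E : Type*} [Fintype ι] [NormedAddCommGroup E]
    [InnerProductSpace ℝ E] (w : ι → ι → ℝ) (hw : ∀ i j, w i j = w j i) (x : ι → E) (b : E) :
    ∑ i, ⟪x i - b, ∑ j, w i j • (x j - x i)⟫ = -(1 / 2) * ∑ i, ∑ j, w i j * ‖x i - x j‖ ^ 2 := by
  simp only [inner_sum, real_inner_smul_right]
  have hswap : ∑ i, ∑ j, w i j * ⟪x i - b, x j - x i⟫
      = ∑ i, ∑ j, w i j * ⟪x j - b, x i - x j⟫ := by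
    rw [sum_comm]
    simp only [hw]
  have hpair : ∀ i j, ⟪x i - b, x j - x i⟫ + ⟪x j - b, x i - x j⟫ = -‖x i - x j‖ ^ 2 := by
    intro i j
    rw [← neg_sub (x i) (x j), inner_neg_right, neg_add_eq_sub, ← inner_sub_left,
      sub_sub_sub_cancel_right, ← neg_sub (x i) (x j), inner_neg_left, real_inner_self_eq_norm_sq]
  have hdouble : 2 * ∑ i, ∑ j, w i j * ⟪x i - b, x j - x i⟫
      = -∑ i, ∑ j, w i j * ‖x i - x j‖ ^ 2 := by
    rw [two_mul]
    nth_rw 2 [hswap]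
    simp only [← sum_add_distrib, ← mul_add, hpair, mul_neg, sum_neg_distrib]
  linarith

section EmpiricalMoments

variable {ι E : Type*} [Fintype ι]

noncomputable def empiricalMean [AddCommGroup E] [Module ℝ E] (x : ι → E) : E :=
  (Fintype.card ι : ℝ)⁻¹ • ∑ i, x i

noncomputable def empiricalVariance [NormedAddCommGroup E] [InnerProductSpace ℝ E] (x : ι → E) :
    ℝ :=
  (Fintype.card ι : ℝ)⁻¹ * ∑ i, ‖x i - empiricalMean x‖ ^ 2

theorem sum_sub_empiricalMean [AddCommGroup E] [Module ℝ E] (x : ι → E) :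
    ∑ i, (x i - empiricalMean x) = 0 := by
  rcases isEmpty_or_nonempty ι with hι | hι
  · exact sum_of_isEmpty _
  have hcard : (Fintype.card ι : ℝ) ≠ 0 := Nat.cast_ne_zero.mpr Fintype.card_ne_zero
  rw [sum_sub_distrib, sum_const, card_univ, empiricalMean, ← Nat.cast_smul_eq_nsmul ℝ, smul_smul,
    mul_inv_cancel₀ hcard, one_smul, sub_self]

variable [NormedAddCommGroup E] [InnerProductSpace ℝ E]

theorem sum_inner_sub_empiricalMean (x : ι → E) (y : E) :
    ∑ i, ⟪x i - empiricalMean x, y⟫ = 0 := by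
  rw [← sum_inner, sum_sub_empiricalMean, inner_zero_left]

theorem sum_inner_sub_empiricalMean_self (x : ι → E) :
    ∑ i, ⟪x i - empiricalMean x, x i⟫ = ∑ i, ‖x i - empiricalMean x‖ ^ 2 := by
  have h : ∀ i, ⟪x i - empiricalMean x, x i⟫
      = ‖x i - empiricalMean x‖ ^ 2 + ⟪x i - empiricalMean x, empiricalMean x⟫ := fun i => by
    rw [← real_inner_self_eq_norm_sq, ← inner_add_right, sub_add_cancel]
  rw [sum_congr rfl fun i _ => h i, sum_add_distrib, sum_inner_sub_empiricalMean, add_zero]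

theorem hasDerivAt_empiricalMean {x : ι → ℝ → E} {x' : ι → E} {t : ℝ}
    (hx : ∀ i, HasDerivAt (x i) (x' i) t) :
    HasDerivAt (fun s => empiricalMean fun i => x i s) (empiricalMean x') t :=
  (HasDerivAt.fun_sum fun i _ => hx i).const_smul _

theorem hasDerivAt_empiricalVariance {x : ι → ℝ → E} {x' : ι → E} {t : ℝ}
    (hx : ∀ i, HasDerivAt (x i) (x' i) t) :
    HasDerivAt (fun s => empiricalVariance fun i => x i s)
      (2 * (Fintype.card ι : ℝ)⁻¹ *
        ∑ i, ⟪x i t - empiricalMean (fun j => x j t), x' i⟫) t := by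
  have hdev := HasDerivAt.fun_sum fun i (_ : i ∈ Finset.univ) =>
    ((hx i).fun_sub (hasDerivAt_empiricalMean hx)).norm_sq
  refine (hdev.const_mul (Fintype.card ι : ℝ)⁻¹).congr_deriv ?_
  simp only [inner_sub_right, mul_sub, sum_sub_distrib, ← mul_sum, sum_inner_sub_empiricalMean]
  ring

theorem sum_inner_sub_empiricalMean_closedLoop (P : E → E → ℝ) (hP : ∀ v w, P v w = P w v)
    (x : ι → E) (a r c e : ℝ) :
    ∑ i, ⟪x i - empiricalMean x, a • ∑ j, P (x i) (x j) • (x j - x i)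
        + (-r) • (c • x i + e • ∑ j, x j)⟫
      = -(1 / 2) * a * ∑ i, ∑ j, P (x i) (x j) * ‖x i - x j‖ ^ 2
        - r * c * ∑ i, ‖x i - empiricalMean x‖ ^ 2 := by
  simp only [inner_add_right, real_inner_smul_right, sum_add_distrib, ← mul_sum,
    sum_inner_sub_sum_smul_sub_of_symm _ (fun i j => hP (x i) (x j)),
    sum_inner_sub_empiricalMean_self, sum_inner_sub_empiricalMean]
  ring

end EmpiricalMoments

theorem closed_loop_variance_evolution_general (N d : ℕ) (T ν : ℝ)
    (P : EuclideanSpace ℝ (Fin d) → EuclideanSpace ℝ (Fin d) → ℝ)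
    (hPsymm : ∀ v w, P v w = P w v)
    (kd ko : ℝ → ℝ)
    (v : Fin N → ℝ → EuclideanSpace ℝ (Fin d))
    (hv : ∀ t ∈ Icc (0:ℝ) T, ∀ i : Fin N,
        HasDerivAt (v i)
          ((N : ℝ)⁻¹ • ∑ j, P (v i t) (v j t) • (v j t - v i t)
            + (-(1 / ν)) • ((kd t - ko t / N) • v i t + (ko t / N) • ∑ j, v j t)) t)
    (m : ℝ → EuclideanSpace ℝ (Fin d))
    (hm : ∀ t, m t = (N : ℝ)⁻¹ • ∑ j, v j t)
    (σ2 : ℝ → ℝ) (hσ2 : ∀ t, σ2 t = (N : ℝ)⁻¹ * ∑ j, ‖v j t - m t‖ ^ 2) :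
    ∀ t ∈ Icc (0:ℝ) T,
      HasDerivAt σ2
        (-(((N : ℝ) ^ 2)⁻¹ * ∑ i, ∑ j, P (v i t) (v j t) * ‖v i t - v j t‖ ^ 2)
          - (2 / ν) * (kd t - ko t / N) * σ2 t) t := by
  intro t ht
  have hmean : ∀ s, m s = empiricalMean fun j => v j s := fun s => by
    simp only [hm, empiricalMean, Fintype.card_fin]
  have hσ2_eq : σ2 = fun s => empiricalVariance fun j => v j s := funext fun s => by
    simp only [hσ2, hmean, empiricalVariance, Fintype.card_fin]
  subst hσ2_eq
  have hderiv := hasDerivAt_empiricalVariance (hv t ht)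
  rw [sum_inner_sub_empiricalMean_closedLoop P hPsymm] at hderiv
  refine hderiv.congr_deriv ?_
  simp only [empiricalVariance, Fintype.card_fin]
  ring

/-- For the closed-loop system with symmetric interaction kernel,
the empirical variance satisfies
`(σ²)'(t) = −(1/N²) Σ_i Σ_j P(v_i,v_j)‖v_i − v_j‖² − (2/ν)(k_d − k_o/N) σ²(t)`. -/
theorem closed_loop_variance_evolution (N d : ℕ) (hN : 1 ≤ N) (hd : 1 ≤ d)
    (T ν p : ℝ) (hT : 0 < T) (hν : 0 < ν)
    (P : EuclideanSpace ℝ (Fin d) → EuclideanSpace ℝ (Fin d) → ℝ)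
    (hPcont : Continuous fun q : EuclideanSpace ℝ (Fin d) × EuclideanSpace ℝ (Fin d) =>
      P q.1 q.2)
    (hPsymm : ∀ v w, P v w = P w v)
    (kd ko : ℝ → ℝ)
    (hkd : ∀ t ∈ Icc (0:ℝ) T, HasDerivAt kd
        (-(-2 * p * (((N : ℝ) - 1) / N) * (kd t - ko t / N)
            - (1 / ν) * ((kd t) ^ 2 + ((((N : ℝ) - 1) / N) / N) * (ko t) ^ 2) + 1)) t)
    (hkdT : kd T = 0)
    (hko : ∀ t ∈ Icc (0:ℝ) T, HasDerivAt ko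
        (-(2 * p * (kd t - ko t / N)
            - (1 / ν) * (2 * kd t * ko t + (((N : ℝ) - 1) / N) * (ko t) ^ 2
                - (ko t) ^ 2 / N))) t)
    (hkoT : ko T = 0)
    (v : Fin N → ℝ → EuclideanSpace ℝ (Fin d))
    (hv : ∀ t ∈ Icc (0:ℝ) T, ∀ i : Fin N,
        HasDerivAt (v i)
          ((N : ℝ)⁻¹ • ∑ j, P (v i t) (v j t) • (v j t - v i t)
            + (-(1 / ν)) • ((kd t - ko t / N) • v i t + (ko t / N) • ∑ j, v j t)) t)
    (m : ℝ → EuclideanSpace ℝ (Fin d))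
    (hm : ∀ t, m t = (N : ℝ)⁻¹ • ∑ j, v j t)
    (σ2 : ℝ → ℝ) (hσ2 : ∀ t, σ2 t = (N : ℝ)⁻¹ * ∑ j, ‖v j t - m t‖ ^ 2) :
    ∀ t ∈ Icc (0:ℝ) T,
      HasDerivAt σ2
        (-(((N : ℝ) ^ 2)⁻¹ * ∑ i, ∑ j, P (v i t) (v j t) * ‖v i t - v j t‖ ^ 2)
          - (2 / ν) * (kd t - ko t / N) * σ2 t) t :=
  closed_loop_variance_evolution_general N d T ν P hPsymm kd ko v hv m hm σ2 hσ2
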